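/- arXiv:2305.17765 — 3 statements merged into one kernel-verified Lean document; each statement's English description precedes it below -/
import Mathlib

section
/- Let A be a Hopf algebra over a commutative ring k and let (∂^{(i)})_{i ≥ 0} be a Hasse–Schmidt derivation on A which is compatible with the Hopf structure in the sense that for all a ∈ A and i ≥ 0: Δ(∂^{(i)}a) = Σ_{j=0}^{i} (∂^{(j)} ⊗ ∂^{(i−j)})(Δa), S(∂^{(i)}a) = ∂^{(i)}(S a), and ε(∂^{(i)}a) = 0 whenever i ≥ 1 and ε(a) = 0. If I is an ideal of A satisfying ∂^{(i)}(I) ⊆ I for all i ≥ 0, then the largest Hopf ideal H(I) contained in I also satisfies ∂^{(i)}(H(I)) ⊆ H(I) for all i ≥ 0. -/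
/-!
`H(I)` is a Hopf ideal, being a sum of Hopf ideals. The ideal generated by all the
`∂⁽ⁱ⁾(H(I))` is again a Hopf ideal: the compatibility of `∂` with `Δ`, `ε` and `S` carries the
three Hopf-ideal conditions from `H(I)` to these generators, and since `Δ`, `ε` and `S` are
multiplicative (`A` is commutative) the conditions pass from generators to the ideal they
generate. This ideal lies in `I` because `I` is `∂`-stable, hence in `H(I)` by maximality.
-/

open TensorProduct

/-- An ideal `I` of a (commutative) Hopf algebra `A` over a commutative ring `k` is a
*Hopf ideal* if `Δ(I) ⊆ I ⊗ A + A ⊗ I`, `ε(I) = 0` and `S(I) ⊆ I`. -/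
def IsHopfIdeal (k : Type*) {A : Type*} [CommRing k] [CommRing A] [HopfAlgebra k A]
    (I : Ideal A) : Prop :=
  (∀ a ∈ I, Coalgebra.comul (R := k) a ∈
      Submodule.map₂ (TensorProduct.mk k A A) (I.restrictScalars k) (⊤ : Submodule k A) ⊔
      Submodule.map₂ (TensorProduct.mk k A A) (⊤ : Submodule k A) (I.restrictScalars k)) ∧
  (∀ a ∈ I, Coalgebra.counit (R := k) a = 0) ∧
  (∀ a ∈ I, HopfAlgebra.antipode (R := k) a ∈ I)

/-- `H(I)`: the sum of all Hopf ideals of `A` contained in the ideal `I`, i.e. the largest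
Hopf ideal contained in `I`. -/
def largestHopfIdealIn (k : Type*) {A : Type*} [CommRing k] [CommRing A] [HopfAlgebra k A]
    (I : Ideal A) : Ideal A :=
  sSup {J : Ideal A | IsHopfIdeal k J ∧ J ≤ I}

namespace Ideal

variable {k A B : Type*} [CommSemiring k] [CommSemiring A] [Algebra k A]
  [CommSemiring B] [Algebra k B]

variable (k) in
/-- `J ⊗ A + A ⊗ J`, as a `k`-submodule of `A ⊗[k] A`. -/
def tensorSumSubmodule (J : Ideal A) : Submodule k (A ⊗[k] A) :=
  Submodule.map₂ (mk k A A) (J.restrictScalars k) ⊤ ⊔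
    Submodule.map₂ (mk k A A) ⊤ (J.restrictScalars k)

theorem map_mem_tensorSumSubmodule {J : Ideal A} {J' : Ideal B} {f g : A →ₗ[k] B}
    (hf : ∀ a ∈ J, f a ∈ J') (hg : ∀ a ∈ J, g a ∈ J') {u : A ⊗[k] A}
    (hu : u ∈ tensorSumSubmodule k J) :
    TensorProduct.map f g u ∈ tensorSumSubmodule k J' := by
  have hleft : Submodule.map₂ (mk k A A) (J.restrictScalars k) ⊤ ≤
      (Submodule.map₂ (mk k B B) (J'.restrictScalars k) ⊤).comap (TensorProduct.map f g) :=
    Submodule.map₂_le.2 fun a ha b _ ↦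
      Submodule.apply_mem_map₂ (mk k B B) (hf a ha) Submodule.mem_top
  have hright : Submodule.map₂ (mk k A A) ⊤ (J.restrictScalars k) ≤
      (Submodule.map₂ (mk k B B) ⊤ (J'.restrictScalars k)).comap (TensorProduct.map f g) :=
    Submodule.map₂_le.2 fun a _ b hb ↦
      Submodule.apply_mem_map₂ (mk k B B) Submodule.mem_top (hg b hb)
  obtain ⟨u₁, hu₁, u₂, hu₂, rfl⟩ := Submodule.mem_sup.1 hu
  rw [map_add]
  exact add_mem (Submodule.mem_sup_left (hleft hu₁)) (Submodule.mem_sup_right (hright hu₂))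

variable (k) in
/-- Multiplication by `c ⊗ₜ d` acts as `map (mulLeft c) (mulLeft d)`, which preserves
`J ⊗ A + A ⊗ J`. -/
def tensorSum (J : Ideal A) : Ideal (A ⊗[k] A) where
  __ := (tensorSumSubmodule k J).toAddSubmonoid
  smul_mem' t u hu := by
    induction t using TensorProduct.induction_on with
    | zero => simp
    | tmul c d =>
      rw [smul_eq_mul, ← LinearMap.mulLeft_apply (R := k), LinearMap.mulLeft_tmul]
      exact map_mem_tensorSumSubmodule (fun a ha ↦ J.mul_mem_left c ha)
        (fun a ha ↦ J.mul_mem_left d ha) hu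
    | add t₁ t₂ h₁ h₂ => rw [add_smul]; exact (tensorSumSubmodule k J).add_mem h₁ h₂

theorem tensorSum_mono : Monotone (tensorSum k (A := A)) := fun _ _ h ↦
  show tensorSumSubmodule k _ ≤ tensorSumSubmodule k _ from
    sup_le_sup (Submodule.map₂_le_map₂_left fun _ hx ↦ h hx)
      (Submodule.map₂_le_map₂_right fun _ hx ↦ h hx)

end Ideal

section HopfIdeal

variable {k A : Type*} [CommRing k] [CommRing A] [HopfAlgebra k A]

theorem isHopfIdeal_iff_le_comap (J : Ideal A) :
    IsHopfIdeal k J ↔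
      J ≤ (J.tensorSum k).comap (Bialgebra.comulAlgHom k A) ∧
      J ≤ RingHom.ker (Bialgebra.counitAlgHom k A) ∧
      J ≤ J.comap (HopfAlgebra.antipodeAlgHom k A) :=
  Iff.rfl

theorem IsHopfIdeal.sSup {S : Set (Ideal A)} (hS : ∀ J ∈ S, IsHopfIdeal k J) :
    IsHopfIdeal k (sSup S) := by
  simp only [isHopfIdeal_iff_le_comap] at hS ⊢
  refine ⟨sSup_le fun J hJ ↦ (hS J hJ).1.trans ?_, sSup_le fun J hJ ↦ (hS J hJ).2.1,
    sSup_le fun J hJ ↦ (hS J hJ).2.2.trans ?_⟩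
  · exact Ideal.comap_mono (Ideal.tensorSum_mono (le_sSup hJ))
  · exact Ideal.comap_mono (le_sSup hJ)

theorem isHopfIdeal_largestHopfIdealIn (I : Ideal A) : IsHopfIdeal k (largestHopfIdealIn k I) :=
  IsHopfIdeal.sSup fun _ hJ ↦ hJ.1

theorem largestHopfIdealIn_le (I : Ideal A) : largestHopfIdealIn k I ≤ I :=
  sSup_le fun _ hJ ↦ hJ.2

theorem le_largestHopfIdealIn {I J : Ideal A} (hJ : IsHopfIdeal k J) (hJI : J ≤ I) :
    J ≤ largestHopfIdealIn k I :=
  le_sSup ⟨hJ, hJI⟩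

end HopfIdeal

section HasseSchmidt

variable {k A : Type*} [CommRing k] [CommRing A] [HopfAlgebra k A]

theorem IsHopfIdeal.span_iUnion_image {J : Ideal A} (hJ : IsHopfIdeal k J)
    (D : ℕ → A →ₗ[k] A) (hD0 : D 0 = LinearMap.id)
    (hcomul : ∀ (i : ℕ) (a : A), Coalgebra.comul (R := k) (D i a) =
      ∑ j ∈ Finset.range (i + 1),
        TensorProduct.map (D j) (D (i - j)) (Coalgebra.comul (R := k) a))
    (hanti : ∀ (i : ℕ) (a : A),
      HopfAlgebra.antipode (R := k) (D i a) = D i (HopfAlgebra.antipode (R := k) a))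
    (hcounit : ∀ (i : ℕ) (a : A), 1 ≤ i → Coalgebra.counit (R := k) a = 0 →
      Coalgebra.counit (R := k) (D i a) = 0) :
    IsHopfIdeal k (Ideal.span (⋃ i, D i '' J)) := by
  obtain ⟨hJcomul, hJcounit, hJanti⟩ := hJ
  have mem_span (i : ℕ) {a : A} (ha : a ∈ J) : D i a ∈ Ideal.span (⋃ i, D i '' J) :=
    Ideal.subset_span (Set.mem_iUnion.2 ⟨i, a, ha, rfl⟩)
  simp only [isHopfIdeal_iff_le_comap, Ideal.span_le, Set.iUnion_subset_iff,
    Set.image_subset_iff]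
  refine ⟨fun i a ha ↦ ?_, fun i a ha ↦ ?_, fun i a ha ↦ ?_⟩
  · show Coalgebra.comul (D i a) ∈ Ideal.tensorSumSubmodule k _
    rw [hcomul]
    exact Submodule.sum_mem _ fun j _ ↦ Ideal.map_mem_tensorSumSubmodule
      (fun _ hb ↦ mem_span j hb) (fun _ hb ↦ mem_span (i - j) hb) (hJcomul a ha)
  · show Coalgebra.counit (D i a) = 0
    cases i with
    | zero => simpa [hD0] using hJcounit a ha
    | succ i => exact hcounit _ a i.succ_pos (hJcounit a ha)
  · show HopfAlgebra.antipode k (D i a) ∈ Ideal.span _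
    rw [hanti]
    exact mem_span i (hJanti a ha)

end HasseSchmidt

theorem largestHopfIdealIn_stable_of_hasseSchmidt_general {k A : Type*} [CommRing k] [CommRing A]
    [HopfAlgebra k A] (D : ℕ → A →ₗ[k] A)
    (hD0 : D 0 = LinearMap.id)
    (hcomul : ∀ (i : ℕ) (a : A), Coalgebra.comul (R := k) (D i a) =
      ∑ j ∈ Finset.range (i + 1),
        TensorProduct.map (D j) (D (i - j)) (Coalgebra.comul (R := k) a))
    (hanti : ∀ (i : ℕ) (a : A),
      HopfAlgebra.antipode (R := k) (D i a) = D i (HopfAlgebra.antipode (R := k) a))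
    (hcounit : ∀ (i : ℕ) (a : A), 1 ≤ i → Coalgebra.counit (R := k) a = 0 →
      Coalgebra.counit (R := k) (D i a) = 0)
    (I : Ideal A) (hI : ∀ (i : ℕ), ∀ a ∈ I, D i a ∈ I) :
    ∀ (i : ℕ), ∀ a ∈ largestHopfIdealIn k I, D i a ∈ largestHopfIdealIn k I := by
  set H := largestHopfIdealIn k I
  have hHopf : IsHopfIdeal k (Ideal.span (⋃ i, D i '' H)) :=
    (isHopfIdeal_largestHopfIdealIn I).span_iUnion_image D hD0 hcomul hanti hcounit
  have hspan_le : Ideal.span (⋃ i, D i '' H) ≤ I :=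
    Ideal.span_le.2 <| Set.iUnion_subset fun i ↦ by
      rintro _ ⟨a, ha, rfl⟩
      exact hI i a (largestHopfIdealIn_le I ha)
  intro i a ha
  exact le_largestHopfIdealIn hHopf hspan_le
    (Ideal.subset_span (Set.mem_iUnion.2 ⟨i, a, ha, rfl⟩))

/-- Let `(∂⁽ⁱ⁾)ᵢ` be a Hasse–Schmidt derivation on a Hopf algebra `A` which is compatible
with the Hopf structure:  `Δ(∂⁽ⁱ⁾a) = Σⱼ (∂⁽ʲ⁾ ⊗ ∂⁽ⁱ⁻ʲ⁾)(Δa)`, `S(∂⁽ⁱ⁾a) = ∂⁽ⁱ⁾(Sa)`, and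
`ε(∂⁽ⁱ⁾a) = 0` whenever `i ≥ 1` and `ε(a) = 0`.  If an ideal `I` is stable under all the
`∂⁽ⁱ⁾`, then so is the largest Hopf ideal `H(I)` contained in `I`. -/
theorem largestHopfIdealIn_stable_of_hasseSchmidt {k A : Type*} [CommRing k] [CommRing A]
    [HopfAlgebra k A] (D : ℕ → A →ₗ[k] A)
    (hD0 : D 0 = LinearMap.id)
    (hLeib : ∀ (i : ℕ) (a b : A),
      D i (a * b) = ∑ j ∈ Finset.range (i + 1), D j a * D (i - j) b)
    (hcomul : ∀ (i : ℕ) (a : A), Coalgebra.comul (R := k) (D i a) =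
      ∑ j ∈ Finset.range (i + 1),
        TensorProduct.map (D j) (D (i - j)) (Coalgebra.comul (R := k) a))
    (hanti : ∀ (i : ℕ) (a : A),
      HopfAlgebra.antipode (R := k) (D i a) = D i (HopfAlgebra.antipode (R := k) a))
    (hcounit : ∀ (i : ℕ) (a : A), 1 ≤ i → Coalgebra.counit (R := k) a = 0 →
      Coalgebra.counit (R := k) (D i a) = 0)
    (I : Ideal A) (hI : ∀ (i : ℕ), ∀ a ∈ I, D i a ∈ I) :
    ∀ (i : ℕ), ∀ a ∈ largestHopfIdealIn k I, D i a ∈ largestHopfIdealIn k I :=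
  largestHopfIdealIn_stable_of_hasseSchmidt_general D hD0 hcomul hanti hcounit I hI
end

section
/- Let k be a commutative ring, ι a type, and let A = k[x_i^{(j)} : i ∈ ι, j ∈ ℕ] be the jet algebra with its Hasse–Schmidt operators ∂^{(m)}. Let P ∈ A be a polynomial lying in the subalgebra generated by the variables x_i^{(0)} (i ∈ ι). Then for every i ∈ ι and all m, s ∈ ℕ: if m ≥ s then (∂/∂x_i^{(s)})(∂^{(m)} P) = ∂^{(m−s)}((∂/∂x_i^{(0)}) P), and if m < s then (∂/∂x_i^{(s)})(∂^{(m)} P) = 0. -/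
/-!
Assemble both sides into power series in `u`. The maps `P ↦ Σₘ (∂/∂xᵢ⁽ˢ⁾)(∂⁽ᵐ⁾P) uᵐ` and
`P ↦ uˢ · jetHom (∂P/∂xᵢ⁽⁰⁾)` are `k`-linear maps `A → A⟦u⟧` satisfying the Leibniz rule
along the algebra homomorphism `jetHom`: the first because `∂/∂xᵢ⁽ˢ⁾` is a derivation applied
coefficientwise, the second because `∂/∂xᵢ⁽⁰⁾` is a derivation and `jetHom` is multiplicative.
Such maps agree on the subalgebra generated by any set on which they agree, and on `xⱼ⁽⁰⁾`,
whose image under `jetHom` is `Σₐ xⱼ⁽ᵃ⁾ uᵃ`, both equal `δᵢⱼ uˢ`.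
-/

open MvPolynomial

/-- The universal Hasse–Schmidt derivation on the jet algebra
`A = k[xᵢ⁽ʲ⁾ : i ∈ ι, j ∈ ℕ]`, packaged as the `k`-algebra homomorphism `A → A[[u]]`
determined on generators by `xᵢ⁽ʲ⁾ ↦ Σₐ binom(j+a, a)·xᵢ⁽ʲ⁺ᵃ⁾·uᵃ`. -/
noncomputable def jetHom (k ι : Type*) [CommRing k] :
    MvPolynomial (ι × ℕ) k →ₐ[k] PowerSeries (MvPolynomial (ι × ℕ) k) :=
  MvPolynomial.aeval fun v : ι × ℕ =>
    PowerSeries.mk fun a : ℕ =>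
      (((v.2 + a).choose a : MvPolynomial (ι × ℕ) k) * X (v.1, v.2 + a))

/-- The operator `∂⁽ᵐ⁾` on the jet algebra: the coefficient of `uᵐ` of `jetHom`. -/
noncomputable def jetDeriv {k ι : Type*} [CommRing k] (m : ℕ)
    (P : MvPolynomial (ι × ℕ) k) : MvPolynomial (ι × ℕ) k :=
  PowerSeries.coeff (R := MvPolynomial (ι × ℕ) k) m (jetHom k ι P)

theorem Algebra.eqOn_adjoin_of_leibniz {R A B : Type*} [CommSemiring R] [Semiring A]
    [Algebra R A] [Ring B] [Algebra R B] (φ : A →ₐ[R] B) {f g : A →ₗ[R] B}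
    (hf : ∀ x y, f (x * y) = φ x * f y + f x * φ y)
    (hg : ∀ x y, g (x * y) = φ x * g y + g x * φ y) {s : Set A} (h : Set.EqOn f g s) :
    Set.EqOn f g (Algebra.adjoin R s) := by
  have map_one_eq_zero {d : A →ₗ[R] B} (hd : ∀ x y, d (x * y) = φ x * d y + d x * φ y) :
      d 1 = 0 := by
    simpa using hd 1 1
  intro x hx
  induction hx using Algebra.adjoin_induction with
  | mem x hx => exact h hx
  | algebraMap r =>
    rw [Algebra.algebraMap_eq_smul_one, map_smul, map_smul, map_one_eq_zero hf,
      map_one_eq_zero hg]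
  | add x y _ _ hx hy => rw [map_add, map_add, hx, hy]
  | mul x y _ _ hx hy => rw [hf, hg, hx, hy]

namespace PowerSeries

variable {R : Type*} [CommSemiring R]

section

variable {A B : Type*} [Semiring A] [Algebra R A] [Semiring B] [Algebra R B]

noncomputable def mapₗ (f : A →ₗ[R] B) : A⟦X⟧ →ₗ[R] B⟦X⟧ where
  toFun p := mk fun n => f (coeff n p)
  map_add' p q := by ext; simp
  map_smul' r p := by ext; simp

@[simp]
theorem coeff_mapₗ (f : A →ₗ[R] B) (p : A⟦X⟧) (n : ℕ) :
    coeff n (mapₗ f p) = f (coeff n p) := by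
  simp [mapₗ]

end

theorem mapₗ_derivation_mul {A : Type*} [CommSemiring A] [Algebra R A] (D : Derivation R A A)
    (p q : A⟦X⟧) :
    mapₗ D.toLinearMap (p * q) = p * mapₗ D.toLinearMap q + mapₗ D.toLinearMap p * q := by
  ext n
  simp [coeff_mul, Finset.sum_add_distrib, mul_comm (coeff _ q)]

end PowerSeries

section JetAlgebra

variable {k ι : Type*} [CommRing k]

theorem jetDeriv_X_zero (j : ι) (m : ℕ) :
    jetDeriv m (X (j, 0) : MvPolynomial (ι × ℕ) k) = X (j, m) := by
  simp [jetDeriv, jetHom]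

noncomputable def pderivJet (i : ι) (s : ℕ) :
    MvPolynomial (ι × ℕ) k →ₗ[k] PowerSeries (MvPolynomial (ι × ℕ) k) :=
  PowerSeries.mapₗ (pderiv (i, s)).toLinearMap ∘ₗ (jetHom k ι).toLinearMap

noncomputable def shiftedJetPderiv (i : ι) (s : ℕ) :
    MvPolynomial (ι × ℕ) k →ₗ[k] PowerSeries (MvPolynomial (ι × ℕ) k) :=
  LinearMap.mulLeft k (PowerSeries.X ^ s) ∘ₗ (jetHom k ι).toLinearMap ∘ₗ
    (pderiv (i, 0)).toLinearMap

theorem coeff_pderivJet (i : ι) (s m : ℕ) (P : MvPolynomial (ι × ℕ) k) :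
    PowerSeries.coeff m (pderivJet i s P) = pderiv (i, s) (jetDeriv m P) := by
  simp [pderivJet, jetDeriv]

theorem coeff_shiftedJetPderiv (i : ι) (s m : ℕ) (P : MvPolynomial (ι × ℕ) k) :
    PowerSeries.coeff m (shiftedJetPderiv i s P) =
      if s ≤ m then jetDeriv (m - s) (pderiv (i, 0) P) else 0 := by
  simp [shiftedJetPderiv, jetDeriv, PowerSeries.coeff_X_pow_mul']

theorem pderivJet_mul (i : ι) (s : ℕ) (P Q : MvPolynomial (ι × ℕ) k) :
    pderivJet i s (P * Q) = jetHom k ι P * pderivJet i s Q + pderivJet i s P * jetHom k ι Q := by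
  simp [pderivJet, PowerSeries.mapₗ_derivation_mul]

theorem shiftedJetPderiv_mul (i : ι) (s : ℕ) (P Q : MvPolynomial (ι × ℕ) k) :
    shiftedJetPderiv i s (P * Q) =
      jetHom k ι P * shiftedJetPderiv i s Q + shiftedJetPderiv i s P * jetHom k ι Q := by
  simp only [shiftedJetPderiv, LinearMap.comp_apply, Derivation.coeFn_coe, Derivation.leibniz,
    smul_eq_mul, AlgHom.toLinearMap_apply, map_add, map_mul, LinearMap.mulLeft_apply]
  ring

theorem pderivJet_X_zero (i j : ι) (s : ℕ) :
    pderivJet i s (X (j, 0) : MvPolynomial (ι × ℕ) k) = shiftedJetPderiv i s (X (j, 0)) := by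
  refine PowerSeries.ext fun m => ?_
  rw [coeff_pderivJet, coeff_shiftedJetPderiv, jetDeriv_X_zero]
  by_cases hji : j = i
  · subst hji
    by_cases hms : m = s
    · simp [hms, pderiv_X_self, jetDeriv]
    · rw [pderiv_X_of_ne (by simpa using hms), pderiv_X_self]
      split_ifs with hsm
      · simp [jetDeriv, PowerSeries.coeff_one, show m - s ≠ 0 by omega]
      · rfl
  · simp [hji, jetDeriv]

end JetAlgebra

/-- If `P` lies in the subalgebra of the jet algebra generated by the variables `xᵢ⁽⁰⁾`,
then `(∂/∂xᵢ⁽ˢ⁾)(∂⁽ᵐ⁾P) = ∂⁽ᵐ⁻ˢ⁾((∂/∂xᵢ⁽⁰⁾)P)` for `m ≥ s`, and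
`(∂/∂xᵢ⁽ˢ⁾)(∂⁽ᵐ⁾P) = 0` for `m < s`. -/
theorem pderiv_jetDeriv {k ι : Type*} [CommRing k] (P : MvPolynomial (ι × ℕ) k)
    (hP : P ∈ Algebra.adjoin k (Set.range fun i : ι => (X (i, 0) : MvPolynomial (ι × ℕ) k)))
    (i : ι) (m s : ℕ) :
    (s ≤ m → pderiv (i, s) (jetDeriv m P) = jetDeriv (m - s) (pderiv (i, 0) P)) ∧
    (m < s → pderiv (i, s) (jetDeriv m P) = 0) := by
  have hseries : pderivJet i s P = shiftedJetPderiv i s P := by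
    refine Algebra.eqOn_adjoin_of_leibniz (jetHom k ι) (pderivJet_mul i s)
      (shiftedJetPderiv_mul i s) ?_ hP
    rintro _ ⟨j, rfl⟩
    exact pderivJet_X_zero i j s
  have hm := congrArg (PowerSeries.coeff m) hseries
  rw [coeff_pderivJet, coeff_shiftedJetPderiv] at hm
  exact ⟨fun hsm => by rwa [if_pos hsm] at hm, fun hms => by rwa [if_neg (not_le.2 hms)] at hm⟩
end

section
/- Let p be a prime and R a commutative ring of characteristic p. Let m ∈ ℕ have base-p expansion m = Σ_{j=0}^{k} m_j p^j with 0 ≤ m_j < p for all j. Then, as operators on the polynomial ring R[X], the composite (D_1)^{m_0} ∘ (D_p)^{m_1} ∘ ⋯ ∘ (D_{p^k})^{m_k} equals (∏_{j=0}^{k} m_j!) · D_m, where D_n denotes the n-th Hasse derivative and (D_{p^j})^{m_j} denotes the m_j-fold iterate. In particular, since each m_j! is a unit in R, every Hasse derivative D_m is, up to a unit of R, a composite of the operators D_{p^j}. -/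
open Polynomial Nat

section aux

variable {p : ℕ} [Fact p.Prime]

/-- `C(s + a·p^j, s) ≡ 1 [MOD p]` when `s < p^j`. -/
lemma lucas_lower (j : ℕ) : ∀ s a : ℕ, s < p ^ j → (s + a * p ^ j).choose s ≡ 1 [MOD p] := by
  induction j with
  | zero =>
    intro s a hs
    have h0 : s = 0 := by simpa using hs
    subst h0
    simp [Nat.ModEq.refl]
  | succ j ih =>
    intro s a hs
    have hp : 0 < p := (Fact.out : p.Prime).pos
    have h1 : (s + a * p ^ (j + 1)) % p = s % p := by
      rw [pow_succ, ← mul_assoc, Nat.add_mul_mod_self_right]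
    have h2 : (s + a * p ^ (j + 1)) / p = s / p + a * p ^ j := by
      rw [pow_succ, ← mul_assoc, Nat.add_mul_div_right _ _ hp]
    calc (s + a * p ^ (j + 1)).choose s
        ≡ ((s + a * p ^ (j+1)) % p).choose (s % p) *
          (((s + a * p ^ (j+1)) / p).choose (s / p)) [MOD p] :=
          Choose.choose_modEq_choose_mod_mul_choose_div_nat
      _ = (s % p).choose (s % p) * ((s / p + a * p ^ j).choose (s / p)) := by rw [h1, h2]
      _ ≡ 1 * 1 [MOD p] := by
          rw [Nat.choose_self, one_mul, one_mul]
          exact ih (s / p) a (Nat.div_lt_of_lt_mul (by rwa [mul_comm, ← pow_succ]))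
      _ = 1 := one_mul 1

/-- `C((a+1)·p^j, p^j) ≡ a + 1 [MOD p]`. -/
lemma lucas_digit (j : ℕ) : ∀ a : ℕ, ((a + 1) * p ^ j).choose (p ^ j) ≡ a + 1 [MOD p] := by
  induction j with
  | zero => intro a; simp [Nat.choose_one_right, Nat.ModEq.refl]
  | succ j ih =>
    intro a
    have hp : 0 < p := (Fact.out : p.Prime).pos
    have h1 : ((a + 1) * p ^ (j + 1)) % p = 0 := by
      rw [pow_succ, ← mul_assoc]; exact Nat.mul_mod_left _ _
    have h2 : (p ^ (j + 1)) % p = 0 := by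
      rw [pow_succ]; exact Nat.mul_mod_left _ _
    have h3 : ((a + 1) * p ^ (j + 1)) / p = (a + 1) * p ^ j := by
      rw [pow_succ, ← mul_assoc, Nat.mul_div_cancel _ hp]
    have h4 : (p ^ (j + 1)) / p = p ^ j := by rw [pow_succ, Nat.mul_div_cancel _ hp]
    calc ((a + 1) * p ^ (j + 1)).choose (p ^ (j + 1))
        ≡ (((a + 1) * p ^ (j+1)) % p).choose ((p ^ (j+1)) % p) *
          ((((a + 1) * p ^ (j+1)) / p).choose ((p ^ (j+1)) / p)) [MOD p] :=
          Choose.choose_modEq_choose_mod_mul_choose_div_nat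
      _ = ((a + 1) * p ^ j).choose (p ^ j) := by
          rw [h1, h2, h3, h4, Nat.choose_self, one_mul]
      _ ≡ a + 1 [MOD p] := ih a

variable {R : Type*} [CommRing R] [CharP R p]

omit [Fact p.Prime] in
lemma nsmul_congr_endo {a b : ℕ} (h : a ≡ b [MOD p]) (f : Module.End R (Polynomial R)) :
    a • f = b • f := by
  rw [← Nat.cast_smul_eq_nsmul R, ← Nat.cast_smul_eq_nsmul R,
    CharP.natCast_eq_natCast' R p h]

/-- In characteristic `p`, `(D_{p^j})^a = a! • D_{a p^j}`. -/
lemma hasseDeriv_pow_prime_pow (j a : ℕ) :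
    (Polynomial.hasseDeriv (p ^ j) : Module.End R (Polynomial R)) ^ a =
      a.factorial • Polynomial.hasseDeriv (a * p ^ j) := by
  induction a with
  | zero => simp [Polynomial.hasseDeriv_zero]; rfl
  | succ a ih =>
    rw [pow_succ, ih, smul_mul_assoc, Module.End.mul_eq_comp, Polynomial.hasseDeriv_comp,
      smul_smul]
    have h : a.factorial * ((a * p ^ j + p ^ j).choose (a * p ^ j)) ≡
        (a + 1).factorial [MOD p] := by
      have : (a * p ^ j + p ^ j).choose (a * p ^ j) ≡ a + 1 [MOD p] := by
        have h1 : a * p ^ j + p ^ j = (a + 1) * p ^ j := by ring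
        have h2 : (a * p ^ j + p ^ j).choose (a * p ^ j) =
            (a * p ^ j + p ^ j).choose (p ^ j) := by
          rw [← Nat.choose_symm (Nat.le_add_right (a * p ^ j) (p ^ j)), Nat.add_sub_cancel_left]
        rw [h2, h1]; exact lucas_digit j a
      calc a.factorial * ((a * p ^ j + p ^ j).choose (a * p ^ j))
          ≡ a.factorial * (a + 1) [MOD p] := Nat.ModEq.mul_left _ this
        _ = (a + 1).factorial := by rw [Nat.factorial_succ, mul_comm]
    rw [nsmul_congr_endo h]
    congr 2
    ring

lemma sum_digits_lt (m : ℕ → ℕ) : ∀ K : ℕ, (∀ j ≤ K, m j < p) →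
    ∑ j ∈ Finset.range (K + 1), m j * p ^ j < p ^ (K + 1) := by
  have hp : 0 < p := (Fact.out : p.Prime).pos
  intro K
  induction K with
  | zero => intro h; simpa using Nat.lt_of_lt_of_le (by simpa using h 0 le_rfl) (by simp)
  | succ K ih =>
    intro h
    rw [Finset.sum_range_succ]
    have h1 : ∑ j ∈ Finset.range (K + 1), m j * p ^ j < p ^ (K + 1) :=
      ih fun j hj => h j (hj.trans (Nat.le_succ K))
    have h2 : m (K + 1) ≤ p - 1 := by have := h (K + 1) le_rfl; omega
    have h3 : m (K + 1) * p ^ (K + 1) ≤ (p - 1) * p ^ (K + 1) :=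
      Nat.mul_le_mul_right _ h2
    have h4 : p ^ (K + 1) + (p - 1) * p ^ (K + 1) = p ^ (K + 1 + 1) := by
      have hq : 1 + (p - 1) = p := by omega
      calc p ^ (K + 1) + (p - 1) * p ^ (K + 1) = (1 + (p - 1)) * p ^ (K + 1) := by ring
        _ = p * p ^ (K + 1) := by rw [hq]
        _ = p ^ (K + 1 + 1) := (pow_succ' p (K + 1)).symm
    omega

end aux

/-- Let `p` be a prime and `R` a commutative ring of characteristic `p`.  If
`m = Σ_{j=0}^{K} m_j p^j` with `0 ≤ m_j < p` is the base-`p` expansion of `m`, then as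
operators on `R[X]` one has
`(D_1)^{m_0} ∘ (D_p)^{m_1} ∘ ⋯ ∘ (D_{p^K})^{m_K} = (∏_j m_j!) · D_m`,
where `D_n` is the `n`-th Hasse derivative.  (In particular, since each `m_j!` is a unit in
`R`, every Hasse derivative is, up to a unit, a composite of the operators `D_{p^j}`.) -/
theorem hasseDeriv_p_adic_composite {R : Type*} [CommRing R] (p : ℕ) (hp : p.Prime)
    [CharP R p] (K : ℕ) (m : ℕ → ℕ) (hm : ∀ j ≤ K, m j < p) :
    ((List.range (K + 1)).map fun j =>
        (Polynomial.hasseDeriv (p ^ j) : Module.End R (Polynomial R)) ^ (m j)).prod =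
      (∏ j ∈ Finset.range (K + 1), Nat.factorial (m j)) •
        (Polynomial.hasseDeriv (∑ j ∈ Finset.range (K + 1), m j * p ^ j) :
          Module.End R (Polynomial R)) := by
  have : Fact p.Prime := ⟨hp⟩
  induction K with
  | zero =>
    simp only [List.range_succ, List.range_zero, List.map_append, List.map_nil, List.map_cons,
      List.nil_append, List.prod_cons, List.prod_nil, mul_one, one_mul, Finset.range_one,
      Finset.prod_singleton, Finset.sum_singleton]
    simpa using hasseDeriv_pow_prime_pow (p := p) (R := R) 0 (m 0)
  | succ K ih =>
    rw [Finset.prod_range_succ, Finset.sum_range_succ, List.range_succ, List.map_append,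
      List.prod_append, List.map_singleton, List.prod_singleton,
      ih (fun j hj => hm j (hj.trans (Nat.le_succ K))),
      hasseDeriv_pow_prime_pow, smul_mul_assoc, mul_smul_comm, smul_smul,
      Module.End.mul_eq_comp, Polynomial.hasseDeriv_comp]
    rw [smul_smul]
    set s := ∑ j ∈ Finset.range (K + 1), m j * p ^ j with hs
    have hlt : s < p ^ (K + 1) := sum_digits_lt m K (fun j hj => hm j (hj.trans (Nat.le_succ K)))
    have hc : (s + m (K + 1) * p ^ (K + 1)).choose s ≡ 1 [MOD p] := lucas_lower (K + 1) s _ hlt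
    have h : (∏ j ∈ Finset.range (K + 1), (m j).factorial) * (m (K + 1)).factorial *
        ((s + m (K + 1) * p ^ (K + 1)).choose s) ≡
        (∏ j ∈ Finset.range (K + 1), (m j).factorial) * (m (K + 1)).factorial * 1 [MOD p] :=
      Nat.ModEq.mul_left _ hc
    rw [nsmul_congr_endo h, mul_one]
end
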